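/- arXiv:2411.03163 — 4 statements merged into one kernel-verified Lean document; each statement's English description precedes it below -/
import Mathlib

section
/- Let H = S⁻ᵀDS⁻¹ be a Hamiltonian matrix with symplectic diagonalization (S symplectic, D = diag(d₁,d₁,…,d_m,d_m), all d_i > 0, d_min and d_max the smallest and largest d_i) and let V := (1/2)·S·diag(coth d₁, coth d₁,…, coth d_m, coth d_m)·Sᵀ be its covariance matrix. Then for every real t ≥ 0, ‖2iΩV + ((t−1)/(t+1))·I‖∞ ≤ ‖S‖∞² · 2/(1 − e^{−2 d_min}). -/
/-!
Because `S` is symplectic, `-(Ω S Ω) = S⁻ᵀ` and `Ω S = S⁻ᵀ Ω`, so with `c = (t - 1)/(t + 1)`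
`2iΩV + c I = S⁻ᵀ (iΩ coth D + c I) Sᵀ`. As `Ω` is orthogonal, `‖S⁻ᵀ‖ = ‖Sᵀ‖ = ‖S‖`, while the
middle factor has norm at most `coth d_min + |c| ≤ coth d_min + 1 = 2 / (1 - e^{-2 d_min})`.
Complexifying a real matrix does not increase its spectral norm, since real and imaginary parts
of a vector are mapped separately.
-/

open Matrix

/-- The spectral norm (ℓ²→ℓ² operator norm, largest singular value) of a matrix. -/
noncomputable def spNorm {𝕜 : Type*} [RCLike 𝕜] {p q : Type*} [Fintype p] [Fintype q]
    [DecidableEq q] (A : Matrix p q 𝕜) : ℝ :=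
  ‖LinearMap.toContinuousLinearMap (Matrix.toEuclideanLin A)‖

/-- Index set for `2m × 2m` matrices: the pair `(i, δ)` stands for the index `2i - δ`,
`(i, 0)` being the first index of the `i`-th pair and `(i, 1)` the second. -/
abbrev Idx (m : ℕ) := Fin m × Fin 2

/-- The standard symplectic form: block diagonal with `m` blocks `[[0,1],[-1,0]]`. -/
def Omega (m : ℕ) : Matrix (Idx m) (Idx m) ℝ :=
  Matrix.of fun p q =>
    if p.1 = q.1 ∧ p.2 = 0 ∧ q.2 = 1 then 1
    else if p.1 = q.1 ∧ p.2 = 1 ∧ q.2 = 0 then -1 else 0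

/-- The diagonal matrix `diag (d₁, d₁, …, d_m, d_m)`. -/
def pairDiag {m : ℕ} (d : Fin m → ℝ) : Matrix (Idx m) (Idx m) ℝ :=
  Matrix.diagonal fun p => d p.1

/-- Hyperbolic cotangent. -/
noncomputable def rcoth (x : ℝ) : ℝ := Real.cosh x / Real.sinh x

/-- A real matrix regarded as a complex matrix. -/
def cplx {p q : Type*} (A : Matrix p q ℝ) : Matrix p q ℂ :=
  A.map (fun x => (x : ℂ))

open scoped Matrix.Norms.L2Operator

lemma spNorm_eq_l2_opNorm {𝕜 : Type*} [RCLike 𝕜] {p q : Type*} [Fintype p] [Fintype q]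
    [DecidableEq q] (A : Matrix p q 𝕜) : spNorm A = ‖A‖ := rfl

section Complexification

variable {p q : Type*}

lemma cplx_mulVec_re [Fintype q] (A : Matrix p q ℝ) (x : q → ℂ) (i : p) :
    ((cplx A *ᵥ x) i).re = (A *ᵥ fun j => (x j).re) i := by
  simp [cplx, mulVec, dotProduct, Complex.re_sum]

lemma cplx_mulVec_im [Fintype q] (A : Matrix p q ℝ) (x : q → ℂ) (i : p) :
    ((cplx A *ᵥ x) i).im = (A *ᵥ fun j => (x j).im) i := by
  simp [cplx, mulVec, dotProduct, Complex.im_sum]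

lemma EuclideanSpace.norm_sq_eq_re_add_im {n : Type*} [Fintype n] (x : EuclideanSpace ℂ n) :
    ‖x‖ ^ 2 = ‖(WithLp.toLp 2 fun i => (x i).re : EuclideanSpace ℝ n)‖ ^ 2
      + ‖(WithLp.toLp 2 fun i => (x i).im : EuclideanSpace ℝ n)‖ ^ 2 := by
  simp only [EuclideanSpace.norm_sq_eq, ← Finset.sum_add_distrib]
  congr 1 with i
  rw [Complex.sq_norm, Complex.normSq_apply, Real.norm_eq_abs, Real.norm_eq_abs, sq_abs, sq_abs,
    sq, sq]

lemma l2_opNorm_cplx_le [Fintype p] [Fintype q] [DecidableEq q] (A : Matrix p q ℝ) :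
    ‖cplx A‖ ≤ ‖A‖ := by
  rw [l2_opNorm_def]
  refine ContinuousLinearMap.opNorm_le_bound _ (norm_nonneg A) fun x => ?_
  refine (sq_le_sq₀ (norm_nonneg _) (by positivity)).mp ?_
  rw [EuclideanSpace.norm_sq_eq_re_add_im, mul_pow, EuclideanSpace.norm_sq_eq_re_add_im x, mul_add,
    ← mul_pow, ← mul_pow]
  gcongr
  · refine (congrArg norm ?_).trans_le (A.l2_opNorm_mulVec (WithLp.toLp 2 fun j => (x j).re))
    ext i
    exact cplx_mulVec_re A x i
  · refine (congrArg norm ?_).trans_le (A.l2_opNorm_mulVec (WithLp.toLp 2 fun j => (x j).im))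
    ext i
    exact cplx_mulVec_im A x i

lemma cplx_mul [Fintype q] {r : Type*} (A : Matrix p q ℝ) (B : Matrix q r ℝ) :
    cplx (A * B) = cplx A * cplx B :=
  Matrix.map_mul (L := A) (M := B) (f := Complex.ofRealHom)

lemma cplx_transpose (A : Matrix p q ℝ) : cplx Aᵀ = (cplx A)ᵀ := rfl

lemma cplx_conjTranspose (A : Matrix p q ℝ) : (cplx A)ᴴ = (cplx A)ᵀ := by
  ext i j
  simp [cplx]

lemma cplx_smul (r : ℝ) (A : Matrix p q ℝ) : cplx (r • A) = (r : ℂ) • cplx A := by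
  ext i j
  simp [cplx]

lemma l2_opNorm_transpose_cplx_le [Fintype p] [Fintype q] [DecidableEq p] [DecidableEq q]
    (A : Matrix p q ℝ) : ‖(cplx A)ᵀ‖ ≤ ‖A‖ := by
  rw [← cplx_conjTranspose, l2_opNorm_conjTranspose]
  exact l2_opNorm_cplx_le A

end Complexification

lemma Omega_transpose (m : ℕ) : (Omega m)ᵀ = -Omega m := by
  ext ⟨i, δ⟩ ⟨j, ε⟩
  by_cases h : i = j <;> fin_cases δ <;> fin_cases ε <;> simp [Omega, h, Ne.symm]

lemma Omega_mul_self (m : ℕ) : Omega m * Omega m = -1 := by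
  ext ⟨i, δ⟩ ⟨j, ε⟩
  simp only [Matrix.mul_apply, Fintype.sum_prod_type, Fin.sum_univ_two]
  by_cases h : i = j <;> fin_cases δ <;> fin_cases ε <;> simp [Omega, h, Ne.symm]

lemma cplx_Omega_mul_self (m : ℕ) : cplx (Omega m) * cplx (Omega m) = -1 := by
  rw [← cplx_mul, Omega_mul_self]
  ext i j
  simp [cplx, Matrix.one_apply, apply_ite (fun r : ℝ => (r : ℂ))]

lemma star_cplx_Omega (m : ℕ) : star (cplx (Omega m)) = -cplx (Omega m) := by
  rw [Matrix.star_eq_conjTranspose, cplx_conjTranspose, ← cplx_transpose, Omega_transpose]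
  ext i j
  simp [cplx]

lemma cplx_Omega_mem_unitary (m : ℕ) : cplx (Omega m) ∈ unitary (Matrix (Idx m) (Idx m) ℂ) := by
  rw [Unitary.mem_iff, star_cplx_Omega, neg_mul, mul_neg, cplx_Omega_mul_self, neg_neg, and_self]

/-- `-(J * T * J)` plays the role of `T⁻ᵀ`: it is a left inverse of `U` and
`-(J * T * J) * J = J * T`. -/
lemma smul_mul_conj_add_smul_one_of_symplectic {R A : Type*} [CommRing R] [Ring A] [Algebra R A]
    {J T U : A} (hJ : J * J = -1) (hT : T * J * U = J) (D : A) (a b : R) :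
    a • (J * (T * D * U)) + b • 1 = -(J * T * J) * (a • (J * D) + b • 1) * U := by
  have hJT : -(J * T * J) * J = J * T := by
    rw [neg_mul, mul_assoc, hJ, mul_neg_one, neg_neg]
  have hinv : -(J * T * J) * U = 1 := by
    rw [neg_mul, mul_assoc, mul_assoc, ← mul_assoc T, hT, hJ, neg_neg]
  rw [mul_add, add_mul, mul_smul_comm, smul_mul_assoc, mul_smul_comm, smul_mul_assoc, mul_one,
    hinv, ← mul_assoc _ J D, hJT]
  simp only [mul_assoc]

lemma norm_neg_mul_mul_of_mem_unitary {E : Type*} [NormedRing E] [StarRing E] [CStarRing E]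
    {J : E} (hJ : J ∈ unitary E) (T : E) : ‖-(J * T * J)‖ = ‖T‖ := by
  rw [norm_neg, CStarRing.norm_mul_mem_unitary _ hJ, CStarRing.norm_mem_unitary_mul _ hJ]

lemma norm_smul_unitary_mul_add_smul_one_le {𝕜 E : Type*} [NormedField 𝕜] [NormedRing E]
    [StarRing E] [CStarRing E] [NormedAlgebra 𝕜 E] [NormOneClass E] {J : E} (hJ : J ∈ unitary E)
    (D : E) (a b : 𝕜) :
    ‖a • (J * D) + b • 1‖ ≤ ‖a‖ * ‖D‖ + ‖b‖ :=
  calc ‖a • (J * D) + b • 1‖ ≤ ‖a • (J * D)‖ + ‖b • (1 : E)‖ := norm_add_le _ _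
    _ = ‖a‖ * ‖D‖ + ‖b‖ := by
      rw [norm_smul, norm_smul, CStarRing.norm_mem_unitary_mul D hJ, norm_one, mul_one]

lemma l2_opNorm_pairDiag_le {m : ℕ} (f : Fin m → ℝ) : ‖pairDiag f‖ ≤ ‖f‖ := by
  rw [pairDiag, l2_opNorm_diagonal]
  exact (pi_norm_le_iff_of_nonneg (norm_nonneg f)).mpr fun p => norm_le_pi_norm f p.1

lemma rcoth_pos {x : ℝ} (hx : 0 < x) : 0 < rcoth x :=
  div_pos (Real.cosh_pos x) (Real.sinh_pos_iff.mpr hx)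

lemma rcoth_le_rcoth {a b : ℝ} (ha : 0 < a) (hab : a ≤ b) : rcoth b ≤ rcoth a := by
  rw [rcoth, rcoth, div_le_div_iff₀ (Real.sinh_pos_iff.mpr (ha.trans_le hab))
    (Real.sinh_pos_iff.mpr ha)]
  have := Real.sinh_nonneg_iff.mpr (sub_nonneg.mpr hab)
  nlinarith [Real.sinh_sub b a]

lemma l2_opNorm_pairDiag_rcoth_le {m : ℕ} {d : Fin m → ℝ} {x : ℝ} (hx : 0 < x)
    (hxd : ∀ i, x ≤ d i) : ‖pairDiag fun i => rcoth (d i)‖ ≤ rcoth x := by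
  refine (l2_opNorm_pairDiag_le _).trans <|
    (pi_norm_le_iff_of_nonneg (rcoth_pos hx).le).mpr fun i => ?_
  rw [Real.norm_of_nonneg (rcoth_pos (hx.trans_le (hxd i))).le]
  exact rcoth_le_rcoth hx (hxd i)

lemma one_add_rcoth {x : ℝ} (hx : x ≠ 0) : 1 + rcoth x = 2 / (1 - Real.exp (-2 * x)) := by
  have hsinh : Real.sinh x ≠ 0 := Real.sinh_ne_zero.mpr hx
  have hexp : 1 - Real.exp (-2 * x) = 2 * Real.sinh x / Real.exp x := by
    rw [Real.sinh_eq, show -2 * x = -x - x by ring, Real.exp_sub, Real.exp_neg]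
    field_simp
  rw [rcoth, one_add_div hsinh, Real.sinh_add_cosh, hexp, div_div_eq_mul_div]
  field_simp

lemma abs_sub_one_div_add_one_le {t : ℝ} (ht : 0 ≤ t) : |(t - 1) / (t + 1)| ≤ 1 := by
  rw [abs_div, abs_of_pos (by linarith : 0 < t + 1), div_le_one (by linarith)]
  exact abs_le.mpr ⟨by linarith, by linarith⟩

theorem statement0_general {m : ℕ}
    (S : Matrix (Idx m) (Idx m) ℝ) (hS : S * Omega m * Sᵀ = Omega m)
    (d : Fin m → ℝ) (hd : ∀ i, 0 < d i)
    (dmin : ℝ)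
    (hdmin_le : ∀ i, dmin ≤ d i) (hdmin_mem : ∃ i, d i = dmin)
    (V : Matrix (Idx m) (Idx m) ℝ)
    (hV : V = (1/2 : ℝ) • (S * pairDiag (fun i => rcoth (d i)) * Sᵀ))
    (t : ℝ) (ht : 0 ≤ t) :
    spNorm ((2 * Complex.I) • (cplx (Omega m) * cplx V) + (((t - 1)/(t + 1) : ℝ) : ℂ) • 1)
      ≤ spNorm S ^ 2 * (2 / (1 - Real.exp (-2 * dmin))) := by
  obtain ⟨i₀, rfl⟩ := hdmin_mem
  have : Nonempty (Fin m) := ⟨i₀⟩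
  set J := cplx (Omega m)
  set T := cplx S
  set C := cplx (pairDiag fun i => rcoth (d i))
  have hJ : J ∈ unitary _ := cplx_Omega_mem_unitary m
  have hT : T * J * Tᵀ = J := by
    rw [← cplx_transpose, ← cplx_mul, ← cplx_mul, hS]
  have hV' : cplx V = T * (((1 / 2 : ℝ) : ℂ) • C) * Tᵀ := by
    rw [hV, cplx_smul, cplx_mul, cplx_mul, cplx_transpose, mul_smul_comm, smul_mul_assoc]
  have hC : ‖C‖ ≤ rcoth (d i₀) :=
    (l2_opNorm_cplx_le _).trans (l2_opNorm_pairDiag_rcoth_le (hd i₀) hdmin_le)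
  have hmid : ‖(2 * Complex.I) • (J * (((1 / 2 : ℝ) : ℂ) • C))
      + (((t - 1) / (t + 1) : ℝ) : ℂ) • 1‖ ≤ rcoth (d i₀) + 1 := by
    refine (norm_smul_unitary_mul_add_smul_one_le hJ _ _ _).trans ?_
    have hc := abs_sub_one_div_add_one_le ht
    have h2I : ‖2 * Complex.I‖ = 2 := by simp
    rw [h2I, norm_smul, Complex.norm_real, Complex.norm_real, Real.norm_eq_abs,
      Real.norm_eq_abs, abs_of_pos one_half_pos]
    linarith
  rw [spNorm_eq_l2_opNorm, spNorm_eq_l2_opNorm, hV',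
    smul_mul_conj_add_smul_one_of_symplectic (cplx_Omega_mul_self m) hT]
  calc _ ≤ ‖-(J * T * J)‖ * ‖_‖ * ‖Tᵀ‖ := norm_mul₃_le
    _ ≤ ‖S‖ * (rcoth (d i₀) + 1) * ‖S‖ := by
      have := rcoth_pos (hd i₀)
      gcongr
      · exact (norm_neg_mul_mul_of_mem_unitary hJ T).trans_le (l2_opNorm_cplx_le S)
      · exact l2_opNorm_transpose_cplx_le S
    _ = _ := by rw [← one_add_rcoth (hd i₀).ne']; ring

/-- For a Gaussian Hamiltonian `H = S⁻ᵀ D S⁻¹` with symplectic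
diagonalization and covariance matrix `V = (1/2) S coth(D) Sᵀ`, for every `t ≥ 0`,
`‖2iΩV + ((t-1)/(t+1))·I‖∞ ≤ ‖S‖∞² · 2/(1 - e^{-2 d_min})`. -/
theorem statement0 {m : ℕ} (hm : 0 < m)
    (S : Matrix (Idx m) (Idx m) ℝ) (hS : S * Omega m * Sᵀ = Omega m)
    (d : Fin m → ℝ) (hd : ∀ i, 0 < d i)
    (dmin dmax : ℝ)
    (hdmin_le : ∀ i, dmin ≤ d i) (hdmin_mem : ∃ i, d i = dmin)
    (hdmax_le : ∀ i, d i ≤ dmax) (hdmax_mem : ∃ i, d i = dmax)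
    (H : Matrix (Idx m) (Idx m) ℝ) (hH : H = (S⁻¹)ᵀ * pairDiag d * S⁻¹)
    (V : Matrix (Idx m) (Idx m) ℝ)
    (hV : V = (1/2 : ℝ) • (S * pairDiag (fun i => rcoth (d i)) * Sᵀ))
    (t : ℝ) (ht : 0 ≤ t) :
    spNorm ((2 * Complex.I) • (cplx (Omega m) * cplx V) + (((t - 1)/(t + 1) : ℝ) : ℂ) • 1)
      ≤ spNorm S ^ 2 * (2 / (1 - Real.exp (-2 * dmin))) :=
  statement0_general S hS d hd dmin hdmin_le hdmin_mem V hV t ht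
end

section
/- Let M be an (m₁+m₂)×(m₁+m₂) positive definite Hermitian complex matrix written in block form M = [[A,B],[C,D]] with A of size m₁×m₁ and D of size m₂×m₂ (so that D and the Schur complement A − BD⁻¹C are invertible). Let N be the upper-left m₁×m₁ block of M⁻¹, so N = (A − BD⁻¹C)⁻¹, and let B̃ be obtained from B by replacing its first row with zeros. Then for every j ∈ {1,…,m₁}: |(N⁻¹)_{1,j} − A_{1,j}| ≤ ‖B − B̃‖∞ · ‖M⁻¹‖∞ · ‖M‖∞ and |(N⁻¹)_{j,1} − A_{j,1}| ≤ ‖B − B̃‖∞ · ‖M⁻¹‖∞ · ‖M‖∞. -/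
open Matrix
open scoped ComplexOrder

/-!
Write `M = [[A, B], [Bᴴ, D]]` and `S = A - B D⁻¹ Bᴴ`. By the block inversion formula `N⁻¹ = S`,
so `N⁻¹ - A = -B D⁻¹ Bᴴ`, and the first row of `B D⁻¹ Bᴴ` only sees the first row `B - B̃` of `B`.
The same formula gives `D⁻¹ Bᴴ = -(M⁻¹)₂₁ S`, and `0 ≤ S ≤ A` in the Loewner order, whence
`‖D⁻¹ Bᴴ‖ ≤ ‖M⁻¹‖ ‖S‖ ≤ ‖M⁻¹‖ ‖A‖ ≤ ‖M⁻¹‖ ‖M‖`. The column estimate follows since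
`N⁻¹ - A` is Hermitian.
-/

namespace Matrix

open scoped Norms.L2Operator

section L2OpNorm

variable {𝕜 : Type*} [RCLike 𝕜] {l m n k : Type*} [Fintype l] [Fintype m] [Fintype n]
  [Fintype k] [DecidableEq l] [DecidableEq m] [DecidableEq n] [DecidableEq k]

lemma l2_opNorm_one_le : ‖(1 : Matrix n n 𝕜)‖ ≤ 1 := by
  rw [← diagonal_one, l2_opNorm_diagonal]
  exact pi_norm_le_iff_of_nonneg zero_le_one |>.2 fun _ => norm_one.le

lemma l2_opNorm_one_submatrix_id_le {f : k → n} (hf : Function.Injective f) :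
    ‖(1 : Matrix n n 𝕜).submatrix id f‖ ≤ 1 := by
  have hQ : ((1 : Matrix n n 𝕜).submatrix id f)ᴴ * (1 : Matrix n n 𝕜).submatrix id f = 1 := by
    rw [conjTranspose_submatrix, conjTranspose_one]
    ext
    simp [mul_apply, one_apply, hf.eq_iff]
  have := l2_opNorm_conjTranspose_mul_self ((1 : Matrix n n 𝕜).submatrix id f)
  rw [hQ] at this
  nlinarith [l2_opNorm_one_le (𝕜 := 𝕜) (n := k), norm_nonneg ((1 : Matrix n n 𝕜).submatrix id f)]

lemma l2_opNorm_submatrix_le (X : Matrix m n 𝕜) {e : l → m} {f : k → n}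
    (he : Function.Injective e) (hf : Function.Injective f) : ‖X.submatrix e f‖ ≤ ‖X‖ := by
  have hX : X.submatrix e f =
      ((1 : Matrix m m 𝕜).submatrix id e)ᴴ * X * (1 : Matrix n n 𝕜).submatrix id f := by
    rw [conjTranspose_submatrix, conjTranspose_one]
    ext
    simp [mul_apply, one_apply]
  rw [hX]
  calc _ ≤ ‖((1 : Matrix m m 𝕜).submatrix id e)ᴴ‖ * ‖X‖ * ‖(1 : Matrix n n 𝕜).submatrix id f‖ :=
        (l2_opNorm_mul _ _).trans (mul_le_mul_of_nonneg_right (l2_opNorm_mul _ _) (norm_nonneg _))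
    _ ≤ 1 * ‖X‖ * 1 := by
        rw [l2_opNorm_conjTranspose]
        gcongr
        exacts [l2_opNorm_one_submatrix_id_le he, l2_opNorm_one_submatrix_id_le hf]
    _ = ‖X‖ := by ring

lemma l2_opNorm_toBlocks₁₁_le (X : Matrix (m ⊕ n) (l ⊕ k) 𝕜) : ‖X.toBlocks₁₁‖ ≤ ‖X‖ :=
  l2_opNorm_submatrix_le X Sum.inl_injective Sum.inl_injective

lemma l2_opNorm_toBlocks₂₁_le (X : Matrix (m ⊕ n) (l ⊕ k) 𝕜) : ‖X.toBlocks₂₁‖ ≤ ‖X‖ :=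
  l2_opNorm_submatrix_le X Sum.inr_injective Sum.inl_injective

lemma norm_apply_le_l2_opNorm (X : Matrix m n 𝕜) (i : m) (j : n) : ‖X i j‖ ≤ ‖X‖ := by
  have hX : X.submatrix (fun _ : Unit => i) (fun _ : Unit => j) = diagonal fun _ => X i j := by
    ext; simp
  calc ‖X i j‖ = ‖X.submatrix (fun _ : Unit => i) (fun _ : Unit => j)‖ := by
        rw [hX, l2_opNorm_diagonal]; simp
    _ ≤ ‖X‖ := l2_opNorm_submatrix_le X (fun _ _ _ => rfl) (fun _ _ _ => rfl)

lemma norm_mul_apply_le_of_row_eq_zero {B B' : Matrix m n 𝕜} (Y : Matrix n k 𝕜) {i : m}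
    (hB' : B' i = 0) (j : k) : ‖(B * Y) i j‖ ≤ ‖B - B'‖ * ‖Y‖ := by
  have hrow : (B * Y) i j = ((B - B') * Y) i j := by
    simp [mul_apply, hB']
  rw [hrow]
  exact (norm_apply_le_l2_opNorm _ i j).trans (l2_opNorm_mul _ _)

end L2OpNorm

section BlockInverse

variable {α : Type*} [CommRing α] {m n : Type*} [Fintype m] [Fintype n] [DecidableEq m]
  [DecidableEq n] {A : Matrix m m α} {B : Matrix m n α} {C : Matrix n m α} {D : Matrix n n α}

lemma isUnit_schur_of_isUnit_fromBlocks (hD : IsUnit D) (hM : IsUnit (fromBlocks A B C D)) :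
    IsUnit (A - B * D⁻¹ * C) := by
  let := hD.invertible
  rw [← invOf_eq_nonsing_inv, ← isUnit_fromBlocks_iff_of_invertible₂₂]
  exact hM

lemma inv_fromBlocks₂₂_eq (hD : IsUnit D) (hM : IsUnit (fromBlocks A B C D)) :
    (fromBlocks A B C D)⁻¹ =
      fromBlocks (A - B * D⁻¹ * C)⁻¹ (-((A - B * D⁻¹ * C)⁻¹ * B * D⁻¹))
        (-(D⁻¹ * C * (A - B * D⁻¹ * C)⁻¹))
        (D⁻¹ + D⁻¹ * C * (A - B * D⁻¹ * C)⁻¹ * B * D⁻¹) := by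
  let := hD.invertible
  let := hM.invertible
  let := invertibleOfFromBlocks₂₂Invertible A B C D
  simp only [← invOf_eq_nonsing_inv]
  exact invOf_fromBlocks₂₂_eq A B C D

lemma inv_toBlocks₁₁_inv_fromBlocks (hD : IsUnit D) (hM : IsUnit (fromBlocks A B C D)) :
    ((fromBlocks A B C D)⁻¹.toBlocks₁₁)⁻¹ = A - B * D⁻¹ * C := by
  have hS := (isUnit_schur_of_isUnit_fromBlocks hD hM).map detMonoidHom
  rw [inv_fromBlocks₂₂_eq hD hM, toBlocks_fromBlocks₁₁, nonsing_inv_nonsing_inv _ hS]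

lemma toBlocks₂₁_inv_fromBlocks_mul (hD : IsUnit D) (hM : IsUnit (fromBlocks A B C D)) :
    (fromBlocks A B C D)⁻¹.toBlocks₂₁ * (A - B * D⁻¹ * C) = -(D⁻¹ * C) := by
  have hS := (isUnit_schur_of_isUnit_fromBlocks hD hM).map detMonoidHom
  rw [inv_fromBlocks₂₂_eq hD hM, toBlocks_fromBlocks₂₁, Matrix.neg_mul, Matrix.mul_assoc,
    nonsing_inv_mul _ hS, Matrix.mul_one]

end BlockInverse

section PosDef

open scoped MatrixOrder

variable {m n : Type*} [Fintype m] [Fintype n] [DecidableEq m] [DecidableEq n]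
  {A : Matrix m m ℂ} {B : Matrix m n ℂ} {D : Matrix n n ℂ}

lemma PosDef.l2_opNorm_schur_le (hM : (fromBlocks A B Bᴴ D).PosDef) :
    ‖A - B * D⁻¹ * Bᴴ‖ ≤ ‖fromBlocks A B Bᴴ D‖ := by
  have hD : D.PosDef := hM.submatrix Sum.inr_injective
  let := hD.isUnit.invertible
  have hS : 0 ≤ A - B * D⁻¹ * Bᴴ := ((PosDef.fromBlocks₂₂ A B hD).1 hM.posSemidef).nonneg
  have hSA : A - B * D⁻¹ * Bᴴ ≤ A := by
    rw [le_iff, sub_sub_cancel]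
    exact hD.inv.posSemidef.mul_mul_conjTranspose_same B
  calc ‖A - B * D⁻¹ * Bᴴ‖ ≤ ‖A‖ := CStarAlgebra.norm_le_norm_of_nonneg_of_le hS hSA
    _ ≤ ‖fromBlocks A B Bᴴ D‖ := by simpa using l2_opNorm_toBlocks₁₁_le (fromBlocks A B Bᴴ D)

lemma PosDef.l2_opNorm_inv_mul_conjTranspose_le (hM : (fromBlocks A B Bᴴ D).PosDef) :
    ‖D⁻¹ * Bᴴ‖ ≤ ‖(fromBlocks A B Bᴴ D)⁻¹‖ * ‖fromBlocks A B Bᴴ D‖ := by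
  have hD : D.PosDef := hM.submatrix Sum.inr_injective
  rw [← neg_neg (D⁻¹ * Bᴴ), norm_neg, ← toBlocks₂₁_inv_fromBlocks_mul hD.isUnit hM.isUnit]
  exact (l2_opNorm_mul _ _).trans <| mul_le_mul (l2_opNorm_toBlocks₂₁_le _)
    hM.l2_opNorm_schur_le (norm_nonneg _) (norm_nonneg _)

end PosDef

end Matrix

open scoped Matrix.Norms.L2Operator

/-- For a positive definite Hermitian block matrix `M = [[A,B],[C,D]]`,
with `N` the upper-left block of `M⁻¹` and `B̃` obtained from `B` by zeroing its first
row, for every `j`: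
`|(N⁻¹)_{1,j} - A_{1,j}| ≤ ‖B - B̃‖∞·‖M⁻¹‖∞·‖M‖∞` and
`|(N⁻¹)_{j,1} - A_{j,1}| ≤ ‖B - B̃‖∞·‖M⁻¹‖∞·‖M‖∞`. -/
theorem statement5 {m₁ m₂ : ℕ} (hm₁ : 0 < m₁)
    (A : Matrix (Fin m₁) (Fin m₁) ℂ) (B : Matrix (Fin m₁) (Fin m₂) ℂ)
    (C : Matrix (Fin m₂) (Fin m₁) ℂ) (D : Matrix (Fin m₂) (Fin m₂) ℂ)
    (M : Matrix (Fin m₁ ⊕ Fin m₂) (Fin m₁ ⊕ Fin m₂) ℂ)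
    (hM : M = Matrix.fromBlocks A B C D)
    (hMpd : M.PosDef)
    (N : Matrix (Fin m₁) (Fin m₁) ℂ) (hN : N = (M⁻¹).toBlocks₁₁)
    (Btilde : Matrix (Fin m₁) (Fin m₂) ℂ)
    (hBtilde : Btilde = Matrix.of fun i j => if i = (⟨0, hm₁⟩ : Fin m₁) then 0 else B i j) :
    ∀ j : Fin m₁,
      ‖(N⁻¹) ⟨0, hm₁⟩ j - A ⟨0, hm₁⟩ j‖
          ≤ spNorm (B - Btilde) * spNorm M⁻¹ * spNorm M ∧
      ‖(N⁻¹) j ⟨0, hm₁⟩ - A j ⟨0, hm₁⟩‖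
          ≤ spNorm (B - Btilde) * spNorm M⁻¹ * spNorm M := by
  subst hM
  obtain ⟨-, -, hC, -⟩ := fromBlocks_inj.1 <| (fromBlocks_conjTranspose A B C D).symm.trans
    hMpd.isHermitian
  subst hC
  have hD : D.PosDef := hMpd.submatrix Sum.inr_injective
  have hNA : N⁻¹ - A = -(B * D⁻¹ * Bᴴ) := by
    rw [hN, inv_toBlocks₁₁_inv_fromBlocks hD.isUnit hMpd.isUnit]
    abel
  have hrow (j : Fin m₁) : ‖(N⁻¹ - A) ⟨0, hm₁⟩ j‖
      ≤ spNorm (B - Btilde) * spNorm (fromBlocks A B Bᴴ D)⁻¹ * spNorm (fromBlocks A B Bᴴ D) := by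
    -- `spNorm X` is definitionally the `Norms.L2Operator` norm `‖X‖`.
    rw [hNA, neg_apply, norm_neg, Matrix.mul_assoc, mul_assoc]
    refine (norm_mul_apply_le_of_row_eq_zero _ ?_ j).trans <| mul_le_mul_of_nonneg_left
      hMpd.l2_opNorm_inv_mul_conjTranspose_le (norm_nonneg _)
    ext; simp [hBtilde]
  have hherm : (N⁻¹ - A).IsHermitian := by
    rw [hNA]
    exact (hD.inv.posSemidef.mul_mul_conjTranspose_same B).isHermitian.neg
  intro j
  have hcol : ‖(N⁻¹ - A) j ⟨0, hm₁⟩‖ = ‖(N⁻¹ - A) ⟨0, hm₁⟩ j‖ := by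
    rw [← hherm.apply, norm_star]
  exact ⟨hrow j, hcol ▸ hrow j⟩
end

section
/- For m ≥ 1 let H_m be the m×m real tridiagonal matrix with (H_m)_{1,1} = 1, (H_m)_{i,i} = 2 for 2 ≤ i ≤ m, (H_m)_{i,i+1} = (H_m)_{i+1,i} = −1 for 1 ≤ i ≤ m−1, and all other entries 0. Then H_m is invertible and its inverse is given entrywise by (H_m⁻¹)_{i,j} = m + 1 − max(i,j) for all i,j ∈ {1,…,m}. -/
/-!
`H_m = Dᵀ D` for the bidiagonal difference matrix `D = 1 - S` (`S` the superdiagonal shift); the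
first column of `D` has a single nonzero entry, which produces the corner entry `1` of `H_m`. The inverse of
`D` is the upper triangular all-ones matrix `U`, so `H_m⁻¹ = U Uᵀ`, and `(U Uᵀ)_{ij}` counts the
indices `k ≥ max(i, j)`.
-/

open Matrix Finset

/-- Indices are `0`-based: the index `i : Fin m` is the paper's index `i + 1`. -/
def triH (m : ℕ) : Matrix (Fin m) (Fin m) ℝ :=
  Matrix.of fun i j =>
    if i = j then (if (i : ℕ) = 0 then 1 else 2)
    else if (i : ℕ) + 1 = (j : ℕ) ∨ (j : ℕ) + 1 = (i : ℕ) then -1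
    else 0

def forwardDiffMatrix (m : ℕ) : Matrix (Fin m) (Fin m) ℝ :=
  of fun i j => (if i = j then 1 else 0) - if (i : ℕ) + 1 = j then 1 else 0

def upperOnes (m : ℕ) : Matrix (Fin m) (Fin m) ℝ :=
  of fun i j => if i ≤ j then 1 else 0

lemma Fin.sum_ite_val_add_one_eq {M : Type*} [AddCommMonoid M] {m : ℕ} (i : Fin m)
    (g : Fin m → M) :
    ∑ k : Fin m, (if (k : ℕ) + 1 = i then g k else 0) =
      if h : (i : ℕ) = 0 then 0 else g ⟨i - 1, by omega⟩ := by
  split_ifs with h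
  · exact sum_eq_zero fun k _ => if_neg (by omega)
  · rw [sum_eq_single ⟨i - 1, by omega⟩ (fun k _ hk => if_neg ?_) (by simp)]
    · exact if_pos (by simp; omega)
    · contrapose! hk
      ext
      simp only
      omega

lemma upperOnes_mul_transpose (m : ℕ) :
    upperOnes m * (upperOnes m)ᵀ =
      of fun i j : Fin m => (m : ℝ) - (max (i : ℕ) (j : ℕ) : ℝ) := by
  ext i j
  have hcount : ({k | j ≤ k ∧ i ≤ k} : Finset (Fin m)) = Ici (max i j) := by
    ext
    simp [and_comm]
  have hmax : max (i : ℕ) j ≤ m := by omega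
  simp [upperOnes, mul_apply, ← ite_and, hcount, Nat.cast_sub hmax]

lemma upperOnes_mul_forwardDiffMatrix (m : ℕ) : upperOnes m * forwardDiffMatrix m = 1 := by
  ext i j
  simp only [upperOnes, forwardDiffMatrix, mul_apply, of_apply, mul_sub, mul_ite, mul_one,
    mul_zero, sum_sub_distrib, sum_ite_eq', mem_univ, ↓reduceIte, Fin.sum_ite_val_add_one_eq,
    dite_eq_ite, one_apply]
  split_ifs <;> simp only [Fin.ext_iff, Fin.le_def] at * <;> first | omega | norm_num

lemma forwardDiffMatrix_mul_upperOnes (m : ℕ) : forwardDiffMatrix m * upperOnes m = 1 :=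
  mul_eq_one_comm.mp (upperOnes_mul_forwardDiffMatrix m)

lemma forwardDiffMatrix_transpose_mul_self (m : ℕ) :
    (forwardDiffMatrix m)ᵀ * forwardDiffMatrix m = triH m := by
  ext i j
  simp only [forwardDiffMatrix, triH, mul_apply, transpose_apply, of_apply, mul_sub, mul_ite,
    mul_one, mul_zero, sum_sub_distrib, sum_ite_eq', mem_univ, ↓reduceIte,
    Fin.sum_ite_val_add_one_eq, dite_eq_ite]
  split_ifs <;> simp only [Fin.ext_iff] at * <;> first | omega | norm_num

lemma triH_mul_upperOnes_mul_transpose (m : ℕ) :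
    triH m * (upperOnes m * (upperOnes m)ᵀ) = 1 := by
  rw [← forwardDiffMatrix_transpose_mul_self, Matrix.mul_assoc, ← Matrix.mul_assoc _ (upperOnes m),
    forwardDiffMatrix_mul_upperOnes, Matrix.one_mul, ← transpose_mul,
    upperOnes_mul_forwardDiffMatrix, transpose_one]

theorem statement14_general (m : ℕ) :
    IsUnit (triH m) ∧
    ∀ i j : Fin m, (triH m)⁻¹ i j = (m : ℝ) - (max (i : ℕ) (j : ℕ) : ℝ) := by
  have hinv := triH_mul_upperOnes_mul_transpose m
  refine ⟨IsUnit.of_mul_eq_one _ hinv, fun i j => ?_⟩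
  rw [inv_eq_right_inv hinv, upperOnes_mul_transpose, of_apply]

/-- `H_m` is invertible and `(H_m⁻¹)_{i,j} = m + 1 - max(i,j)`
(in `1`-based indices; in the `0`-based indices used here, `m - max(i,j)`). -/
theorem statement14 (m : ℕ) (hm : 1 ≤ m) :
    IsUnit (triH m) ∧
    ∀ i j : Fin m, (triH m)⁻¹ i j = (m : ℝ) - (max (i : ℕ) (j : ℕ) : ℝ) :=
  statement14_general m
end

section
/- Let X and Y be real-valued random variables defined on a common probability space (not assumed independent) such that the law of X is the Gaussian distribution with mean μ and variance σ² and the law of Y is the Gaussian distribution with mean ν and variance τ². Set C := 2·max{(√2·σ + |μ|)², (√2·τ + |ν|)²}. Then for every integer q ≥ 1, E[(XY − E[XY])^{2q}] ≤ (2q)! · C^{2q}. -/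
/-!
Write `W = XY` and `p = 2q`. In `Lᵖ`, `|E W| ≤ ‖W‖₁ ≤ ‖W‖ₚ` and the triangle inequality give
`‖W - E W‖ₚ ≤ 2 ‖W‖ₚ`, and Hölder gives `‖W‖ₚ ≤ ‖X‖₂ₚ ‖Y‖₂ₚ`. For a standard Gaussian `G`,
`E G^{2n} = (2n-1)‼ ≤ 2ⁿ n!`, so Minkowski applied to `X = σ G + μ₀` gives
`E X^{2n} ≤ n! (√2 σ + |μ₀|)^{2n}`. Taking `n = 2q` for `X` and `Y` bounds `E (W - E W)^{2q}` by
`(2q)! (2ab)^{2q}` with `a = √2 σ + |μ₀|`, `b = √2 τ + |ν|`, and `2ab ≤ 2 max (a², b²) = C`.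
-/

open MeasureTheory ProbabilityTheory Real
open scoped NNReal ENNReal Nat

theorem Nat.doubleFactorial_le_doubleFactorial_succ : ∀ m : ℕ, m‼ ≤ (m + 1)‼
  | 0 => le_rfl
  | 1 => by decide
  | m + 2 => by
    rw [Nat.doubleFactorial_add_two, Nat.doubleFactorial_add_two (m + 1)]
    exact Nat.mul_le_mul (by omega) (doubleFactorial_le_doubleFactorial_succ m)

theorem Nat.doubleFactorial_two_mul_sub_one_le (n : ℕ) : (2 * n - 1)‼ ≤ 2 ^ n * n ! := by
  rw [← Nat.doubleFactorial_two_mul]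
  rcases Nat.eq_zero_or_pos n with rfl | hn
  · rfl
  · simpa [Nat.sub_add_cancel (by omega : 1 ≤ 2 * n)] using
      Nat.doubleFactorial_le_doubleFactorial_succ (2 * n - 1)

theorem integral_pow_two_mul_gaussianReal_zero_one (n : ℕ) :
    ∫ x, x ^ (2 * n) ∂gaussianReal 0 1 = (2 * n - 1)‼ := by
  let f : ℝ → ℝ := fun t ↦
    (√(2 * π))⁻¹ * (t ^ ((2 * n : ℕ) : ℝ) * rexp (-(1 / 2) * t ^ (2 : ℝ)))
  have hf : ∀ x : ℝ, gaussianPDFReal 0 1 x • x ^ (2 * n) = f |x| := fun x ↦ by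
    simp only [gaussianPDFReal, f, smul_eq_mul, rpow_natCast, rpow_two, sq_abs,
      Even.pow_abs ⟨n, two_mul n⟩ x]
    push_cast
    ring_nf
  have hpow : (1 / 2 : ℝ) ^ (-((2 * n : ℕ) + 1 : ℝ) / 2) = 2 ^ n * √2 := by
    rw [one_div, inv_rpow zero_le_two, ← rpow_neg zero_le_two, sqrt_eq_rpow, ← rpow_natCast,
      ← rpow_add two_pos]
    push_cast
    ring_nf
  rw [integral_gaussianReal_eq_integral_smul one_ne_zero]
  simp_rw [hf]
  rw [integral_comp_abs, integral_const_mul,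
    integral_rpow_mul_exp_neg_mul_rpow two_pos (neg_one_lt_zero.trans_le (Nat.cast_nonneg _))
      one_half_pos, hpow,
    show (((2 * n : ℕ) : ℝ) + 1) / 2 = n + 1 / 2 by push_cast; ring, Gamma_nat_add_half,
    sqrt_mul zero_le_two]
  field_simp

theorem eLpNorm_natCast_pow {α ε : Type*} [MeasurableSpace α] [TopologicalSpace ε]
    [ContinuousENorm ε] {μ : Measure α} (f : α → ε) {k : ℕ} (hk : k ≠ 0) :
    eLpNorm f k μ ^ k = ∫⁻ x, ‖f x‖ₑ ^ k ∂μ := by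
  simpa using eLpNorm_nnreal_pow_eq_lintegral (f := f) (μ := μ) (p := k) (by exact_mod_cast hk)

theorem integral_abs_pow_eq_toReal_eLpNorm_pow {α : Type*} [MeasurableSpace α] {μ : Measure α}
    {f : α → ℝ} (hf : AEStronglyMeasurable f μ) {k : ℕ} (hk : k ≠ 0) :
    ∫ x, |f x| ^ k ∂μ = (eLpNorm f k μ ^ k).toReal := by
  have hm : AEStronglyMeasurable (fun x ↦ |f x| ^ k) μ := by fun_prop
  rw [integral_eq_lintegral_of_nonneg_ae (ae_of_all _ fun x ↦ by positivity) hm,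
    eLpNorm_natCast_pow f hk]
  simp_rw [Real.enorm_eq_ofReal_abs, ENNReal.ofReal_pow (abs_nonneg _)]

theorem eLpNorm_id_gaussianReal_zero_one_pow {n : ℕ} (hn : n ≠ 0) :
    eLpNorm id (2 * n : ℕ) (gaussianReal 0 1) ^ (2 * n) = (2 * n - 1)‼ := by
  have hfin : eLpNorm id (2 * n : ℕ) (gaussianReal 0 1) ^ (2 * n) ≠ ∞ :=
    ENNReal.pow_ne_top (memLp_id_gaussianReal' _ (ENNReal.natCast_ne_top _)).eLpNorm_ne_top
  have h := integral_abs_pow_eq_toReal_eLpNorm_pow (μ := gaussianReal 0 1)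
    aestronglyMeasurable_id (k := 2 * n) (by omega)
  simp_rw [id, Even.pow_abs ⟨n, two_mul n⟩, integral_pow_two_mul_gaussianReal_zero_one] at h
  rw [← ENNReal.ofReal_toReal hfin, ← h]
  simp

theorem gaussianReal_sq_eq_map_gaussianReal_zero_one (m : ℝ) (σ : ℝ≥0) :
    gaussianReal m (σ ^ 2) = (gaussianReal 0 1).map (fun x ↦ σ * x + m) := by
  rw [show (fun x : ℝ ↦ σ * x + m) = (· + m) ∘ (σ * ·) from rfl,
    ← Measure.map_map (measurable_add_const m) (measurable_const_mul _),
    gaussianReal_map_const_mul, gaussianReal_map_add_const]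
  congr 1
  · simp
  · ext; simp

theorem ENNReal.add_pow_le_mul_add_pow {A B a b K : ℝ≥0∞} {k : ℕ} (hK : 1 ≤ K)
    (hA : A ^ k ≤ K * a ^ k) (hB : B ^ k ≤ K * b ^ k) : (A + B) ^ k ≤ K * (a + b) ^ k := by
  rcases eq_or_ne k 0 with rfl | hk
  · simpa using hK
  set c := K ^ (k⁻¹ : ℝ)
  have hc : c ^ k = K := ENNReal.rpow_inv_natCast_pow hk K
  have hA' : A ≤ c * a := by rwa [← ENNReal.pow_le_pow_left_iff hk, mul_pow, hc]
  have hB' : B ≤ c * b := by rwa [← ENNReal.pow_le_pow_left_iff hk, mul_pow, hc]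
  calc (A + B) ^ k ≤ (c * (a + b)) ^ k := by rw [mul_add]; gcongr
    _ = K * (a + b) ^ k := by rw [mul_pow, hc]

theorem eLpNorm_id_gaussianReal_pow_le (m : ℝ) (σ : ℝ≥0) {n : ℕ} (hn : n ≠ 0) :
    eLpNorm id (2 * n : ℕ) (gaussianReal m (σ ^ 2)) ^ (2 * n)
      ≤ n ! * ENNReal.ofReal (√2 * σ + |m|) ^ (2 * n) := by
  have hp : (1 : ℝ≥0∞) ≤ (2 * n : ℕ) := by exact_mod_cast (by omega : 1 ≤ 2 * n)
  have hsplit : eLpNorm id (2 * n : ℕ) (gaussianReal m (σ ^ 2))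
      ≤ σ * eLpNorm id (2 * n : ℕ) (gaussianReal 0 1) + ‖m‖ₑ := by
    rw [gaussianReal_sq_eq_map_gaussianReal_zero_one, eLpNorm_map_measure aestronglyMeasurable_id
      (by fun_prop)]
    have h := eLpNorm_add_le (p := (2 * n : ℕ)) (μ := gaussianReal 0 1) (f := (σ : ℝ) • id)
      (g := fun _ ↦ m) (aestronglyMeasurable_id.const_smul _) aestronglyMeasurable_const hp
    rwa [eLpNorm_const_smul, eLpNorm_const _ (by positivity) (NeZero.ne _), NNReal.enorm_eq,
      measure_univ, ENNReal.one_rpow, mul_one] at h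
  have hsd : (σ * eLpNorm id (2 * n : ℕ) (gaussianReal 0 1)) ^ (2 * n)
      ≤ n ! * ENNReal.ofReal (√2 * σ) ^ (2 * n) := by
    have hscale : ENNReal.ofReal (√2 * σ) ^ (2 * n) = 2 ^ n * (σ : ℝ≥0∞) ^ (2 * n) := by
      rw [← ENNReal.ofReal_pow (by positivity), mul_pow, pow_mul, sq_sqrt zero_le_two,
        ENNReal.ofReal_mul (by positivity), ENNReal.ofReal_pow zero_le_two,
        ENNReal.ofReal_pow NNReal.zero_le_coe, ENNReal.ofReal_ofNat, ENNReal.ofReal_coe_nnreal]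
    calc (σ * eLpNorm id (2 * n : ℕ) (gaussianReal 0 1)) ^ (2 * n)
        = ((2 * n - 1)‼ : ℕ) * (σ : ℝ≥0∞) ^ (2 * n) := by
          rw [mul_pow, eLpNorm_id_gaussianReal_zero_one_pow hn, mul_comm]
      _ ≤ ((2 ^ n * n ! : ℕ) : ℝ≥0∞) * (σ : ℝ≥0∞) ^ (2 * n) := by
          gcongr; exact Nat.doubleFactorial_two_mul_sub_one_le n
      _ = n ! * ENNReal.ofReal (√2 * σ) ^ (2 * n) := by
          rw [hscale]; push_cast; ring
  have hmean : ‖m‖ₑ ^ (2 * n) ≤ n ! * ENNReal.ofReal |m| ^ (2 * n) := by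
    rw [Real.enorm_eq_ofReal_abs]
    exact le_mul_of_one_le_left' (by exact_mod_cast n.factorial_pos)
  calc _ ≤ (σ * eLpNorm id (2 * n : ℕ) (gaussianReal 0 1) + ‖m‖ₑ) ^ (2 * n) := by gcongr
    _ ≤ n ! * (ENNReal.ofReal (√2 * σ) + ENNReal.ofReal |m|) ^ (2 * n) :=
        ENNReal.add_pow_le_mul_add_pow (by exact_mod_cast n.factorial_pos) hsd hmean
    _ = n ! * ENNReal.ofReal (√2 * σ + |m|) ^ (2 * n) := by
        rw [ENNReal.ofReal_add (by positivity) (abs_nonneg _)]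

section Moments

variable {Ω : Type*} [MeasurableSpace Ω] {μ : Measure Ω}

theorem eLpNorm_sub_integral_le [IsProbabilityMeasure μ] {W : Ω → ℝ}
    (hW : AEStronglyMeasurable W μ) {p : ℝ≥0∞} (hp : 1 ≤ p) :
    eLpNorm (fun ω ↦ W ω - ∫ ω', W ω' ∂μ) p μ ≤ 2 * eLpNorm W p μ := by
  have hmean : ‖∫ ω, W ω ∂μ‖ₑ ≤ eLpNorm W p μ :=
    calc ‖∫ ω, W ω ∂μ‖ₑ ≤ ∫⁻ ω, ‖W ω‖ₑ ∂μ := enorm_integral_le_lintegral_enorm _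
      _ = eLpNorm W 1 μ := eLpNorm_one_eq_lintegral_enorm.symm
      _ ≤ eLpNorm W p μ := eLpNorm_le_eLpNorm_of_exponent_le hp hW
  calc eLpNorm (fun ω ↦ W ω - ∫ ω', W ω' ∂μ) p μ
      ≤ eLpNorm W p μ + eLpNorm (fun _ ↦ ∫ ω', W ω' ∂μ) p μ :=
        eLpNorm_sub_le hW aestronglyMeasurable_const hp
    _ = eLpNorm W p μ + ‖∫ ω, W ω ∂μ‖ₑ := by
        rw [eLpNorm_const _ (by positivity) (NeZero.ne μ), measure_univ, ENNReal.one_rpow,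
          mul_one]
    _ ≤ 2 * eLpNorm W p μ := by rw [two_mul]; gcongr

instance ENNReal.HolderTriple.two_mul (p : ℝ≥0∞) : ENNReal.HolderTriple (2 * p) (2 * p) p where
  inv_add_inv_eq_inv := by
    rw [ENNReal.mul_inv (Or.inl two_ne_zero) (Or.inl ENNReal.ofNat_ne_top), ← add_mul,
      ENNReal.inv_two_add_inv_two, one_mul]

theorem eLpNorm_mul_le_eLpNorm_two_mul {X Y : Ω → ℝ} (hX : AEStronglyMeasurable X μ)
    (hY : AEStronglyMeasurable Y μ) (p : ℝ≥0∞) :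
    eLpNorm (fun ω ↦ X ω * Y ω) p μ ≤ eLpNorm X (2 * p) μ * eLpNorm Y (2 * p) μ := by
  simpa using eLpNorm_le_eLpNorm_mul_eLpNorm'_of_norm hX hY (· * ·) 1
    (ae_of_all _ fun ω ↦ by simp [norm_mul])

theorem eLpNorm_mul_sub_integral_pow_le [IsProbabilityMeasure μ] {X Y : Ω → ℝ}
    (hX : AEStronglyMeasurable X μ) (hY : AEStronglyMeasurable Y μ) {p : ℕ} (hp : p ≠ 0)
    {K a b : ℝ≥0∞} (hXb : eLpNorm X (2 * p : ℕ) μ ^ (2 * p) ≤ K * a ^ (2 * p))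
    (hYb : eLpNorm Y (2 * p : ℕ) μ ^ (2 * p) ≤ K * b ^ (2 * p)) :
    eLpNorm (fun ω ↦ X ω * Y ω - ∫ ω', X ω' * Y ω' ∂μ) p μ ^ p ≤ K * (2 * a * b) ^ p := by
  push_cast at hXb hYb
  set nX := eLpNorm X (2 * p) μ
  set nY := eLpNorm Y (2 * p) μ
  have hprod : (nX * nY) ^ p ≤ K * (a * b) ^ p := by
    rw [← ENNReal.pow_le_pow_left_iff two_ne_zero]
    calc ((nX * nY) ^ p) ^ 2 = nX ^ (2 * p) * nY ^ (2 * p) := by ring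
      _ ≤ (K * a ^ (2 * p)) * (K * b ^ (2 * p)) := by gcongr
      _ = (K * (a * b) ^ p) ^ 2 := by ring
  have hp1 : (1 : ℝ≥0∞) ≤ p := by exact_mod_cast Nat.one_le_iff_ne_zero.mpr hp
  calc eLpNorm (fun ω ↦ X ω * Y ω - ∫ ω', X ω' * Y ω' ∂μ) p μ ^ p
      ≤ (2 * (nX * nY)) ^ p := by
        gcongr
        exact (eLpNorm_sub_integral_le (hX.mul hY) hp1).trans
          (by gcongr; exact eLpNorm_mul_le_eLpNorm_two_mul hX hY _)
    _ = 2 ^ p * (nX * nY) ^ p := mul_pow _ _ _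
    _ ≤ 2 ^ p * (K * (a * b) ^ p) := by gcongr
    _ = K * (2 * a * b) ^ p := by ring

end Moments

/-- If `X ~ N(μ₀, σ²)` and `Y ~ N(ν, τ²)` (not necessarily
independent), and `C := 2·max{(√2·σ + |μ₀|)², (√2·τ + |ν|)²}`, then for every `q ≥ 1`,
`E[(XY - E[XY])^{2q}] ≤ (2q)! · C^{2q}`. -/
theorem statement16 {Ω : Type*} [MeasurableSpace Ω] (μ : Measure Ω)
    [IsProbabilityMeasure μ]
    (X Y : Ω → ℝ) (hX : Measurable X) (hY : Measurable Y)
    (μ₀ ν : ℝ) (σ τ : ℝ≥0)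
    (hlawX : μ.map X = gaussianReal μ₀ (σ ^ 2))
    (hlawY : μ.map Y = gaussianReal ν (τ ^ 2))
    (C : ℝ)
    (hC : C = 2 * max ((Real.sqrt 2 * σ + |μ₀|) ^ 2) ((Real.sqrt 2 * τ + |ν|) ^ 2))
    (q : ℕ) (hq : 1 ≤ q) :
    ∫ ω, (X ω * Y ω - ∫ ω', X ω' * Y ω' ∂μ) ^ (2 * q) ∂μ ≤
      ((2 * q).factorial : ℝ) * C ^ (2 * q) := by
  have hmoment {Z : Ω → ℝ} (hZ : Measurable Z) {m : ℝ} {s : ℝ≥0}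
      (hlaw : μ.map Z = gaussianReal m (s ^ 2)) :
      eLpNorm Z (2 * (2 * q) : ℕ) μ ^ (2 * (2 * q))
        ≤ (2 * q)! * ENNReal.ofReal (√2 * s + |m|) ^ (2 * (2 * q)) := by
    rw [← Function.id_comp Z, ← eLpNorm_map_measure (by rw [hlaw]; exact aestronglyMeasurable_id)
      hZ.aemeasurable, hlaw]
    exact eLpNorm_id_gaussianReal_pow_le m s (by omega)
  set a := √2 * σ + |μ₀|
  set b := √2 * τ + |ν|
  have hbound := eLpNorm_mul_sub_integral_pow_le hX.aestronglyMeasurable hY.aestronglyMeasurable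
    (by omega) (hmoment hX hlawX) (hmoment hY hlawY)
  have hab : 2 * a * b ≤ C := by
    rw [hC]
    nlinarith [le_max_left (a ^ 2) (b ^ 2), le_max_right (a ^ 2) (b ^ 2), sq_nonneg (a - b)]
  calc ∫ ω, (X ω * Y ω - ∫ ω', X ω' * Y ω' ∂μ) ^ (2 * q) ∂μ
      = (eLpNorm (fun ω ↦ X ω * Y ω - ∫ ω', X ω' * Y ω' ∂μ) (2 * q : ℕ) μ ^ (2 * q)).toReal := by
        rw [← integral_abs_pow_eq_toReal_eLpNorm_pow (by fun_prop) (by omega)]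
        simp_rw [Even.pow_abs ⟨q, two_mul q⟩]
    _ ≤ ((2 * q)! * (2 * ENNReal.ofReal a * ENNReal.ofReal b) ^ (2 * q)).toReal :=
        ENNReal.toReal_mono (by finiteness) hbound
    _ = (2 * q)! * (2 * a * b) ^ (2 * q) := by
        simp [ENNReal.toReal_ofReal (by positivity : 0 ≤ a),
          ENNReal.toReal_ofReal (by positivity : 0 ≤ b)]
    _ ≤ (2 * q)! * C ^ (2 * q) := by gcongr
end
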